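/- λ·Σ_{k=0}^∞ (1/(1+λ))^{k²} tends to 0 as λ → 0⁺. -/

import Mathlib

/-!
Fix `N ≥ 1` and put `x = 1 / (1 + λ)`. The terms with `k < N` contribute at most `N`, and for
`k ≥ N` we have `k² ≥ N k`, so the rest is dominated by the geometric series of ratio `x ^ N`.
Bernoulli's inequality `(1 + λ) ^ N - 1 ≥ N λ` turns this into
`λ · Σ x ^ (k²) ≤ N λ + (1 + λ) ^ N / N`, whose limit as `λ → 0⁺` is `1 / N`; and `N` is arbitrary.
-/

open Filter Topology

lemma summable_pow_sq {x : ℝ} (hx0 : 0 ≤ x) (hx1 : x < 1) :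
    Summable fun k : ℕ => x ^ (k ^ 2) :=
  (summable_geometric_of_lt_one hx0 hx1).of_nonneg_of_le (fun _ => by positivity)
    fun k => pow_le_pow_of_le_one hx0 hx1.le (Nat.le_self_pow two_ne_zero k)

lemma tsum_pow_sq_le {x : ℝ} (hx0 : 0 ≤ x) (hx1 : x < 1) {N : ℕ} (hN : N ≠ 0) :
    ∑' k : ℕ, x ^ (k ^ 2) ≤ N + (1 - x ^ N)⁻¹ := by
  have hxN : x ^ N < 1 := pow_lt_one₀ hx0 hx1 hN
  have hgeom := summable_geometric_of_lt_one (pow_nonneg hx0 N) hxN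
  have hind : Summable fun k : ℕ => Set.indicator (Set.Iio N) (fun _ => (1 : ℝ)) k :=
    summable_of_ne_finset_zero (s := Finset.range N) fun k hk => by simp_all
  calc ∑' k : ℕ, x ^ (k ^ 2)
      ≤ ∑' k : ℕ, (Set.indicator (Set.Iio N) (fun _ => (1 : ℝ)) k + (x ^ N) ^ k) := by
        refine (summable_pow_sq hx0 hx1).tsum_le_tsum (fun k => ?_) (hind.add hgeom)
        by_cases hk : k < N
        · have hle_one := pow_le_one₀ hx0 hx1.le (n := k ^ 2)
          simp only [Set.indicator_of_mem (show k ∈ Set.Iio N from hk)]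
          linarith [pow_nonneg (pow_nonneg hx0 N) k]
        · simp only [Set.indicator_of_notMem (show k ∉ Set.Iio N from hk), zero_add, ← pow_mul]
          exact pow_le_pow_of_le_one hx0 hx1.le (by nlinarith [not_lt.1 hk])
    _ = N + (1 - x ^ N)⁻¹ := by
        rw [hind.tsum_add hgeom, tsum_geometric_of_lt_one (pow_nonneg hx0 N) hxN,
          tsum_eq_sum (s := Finset.range N) fun k hk => by simp_all,
          Finset.sum_congr rfl fun k hk =>
            Set.indicator_of_mem (s := Set.Iio N) (Finset.mem_range.1 hk) fun _ => (1 : ℝ)]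
        simp

lemma mul_inv_one_sub_inv_pow_le {l : ℝ} (hl : 0 < l) {N : ℕ} (hN : N ≠ 0) :
    l * (1 - (1 / (1 + l)) ^ N)⁻¹ ≤ (1 + l) ^ N / N := by
  have hNpos : (0 : ℝ) < N := by positivity
  have hbern : 1 + N * l ≤ (1 + l) ^ N := one_add_mul_le_pow (by linarith) N
  have hy : 0 < (1 + l) ^ N := by positivity
  rw [div_pow, one_pow, one_sub_div hy.ne', inv_div, ← mul_div_assoc,
    div_le_div_iff₀ (by nlinarith) hNpos]
  nlinarith

lemma mul_tsum_inv_one_add_pow_sq_le {l : ℝ} (hl : 0 < l) {N : ℕ} (hN : N ≠ 0) :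
    l * ∑' k : ℕ, (1 / (1 + l)) ^ (k ^ 2) ≤ N * l + (1 + l) ^ N / N := by
  have hx1 : 1 / (1 + l) < 1 := (div_lt_one (by positivity)).2 (by linarith)
  calc l * ∑' k : ℕ, (1 / (1 + l)) ^ (k ^ 2)
      ≤ l * (N + (1 - (1 / (1 + l)) ^ N)⁻¹) :=
        mul_le_mul_of_nonneg_left (tsum_pow_sq_le (by positivity) hx1 hN) hl.le
    _ ≤ N * l + (1 + l) ^ N / N := by
        rw [mul_add, mul_comm]
        gcongr
        exact mul_inv_one_sub_inv_pow_le hl hN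

/-- λ·Σ_{k=0}^∞ (1/(1+λ))^{k²} tends to 0 as λ → 0⁺. -/
theorem stmt_1 :
    Filter.Tendsto (fun l : ℝ => l * ∑' k : ℕ, (1 / (1 + l)) ^ (k ^ 2))
      (nhdsWithin 0 (Set.Ioi 0)) (nhds 0) := by
  refine tendsto_order.2 ⟨fun a ha => ?_, fun b hb => ?_⟩
  · filter_upwards [self_mem_nhdsWithin] with l (hl : 0 < l)
    exact ha.trans_le (by positivity)
  · obtain ⟨N, hN⟩ := exists_nat_one_div_lt hb
    have hbound : Tendsto (fun l : ℝ => (N + 1 : ℕ) * l + (1 + l) ^ (N + 1) / (N + 1 : ℕ))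
        (𝓝[>] 0) (𝓝 (1 / (N + 1))) :=
      tendsto_nhdsWithin_of_tendsto_nhds <| Continuous.tendsto' (by fun_prop) _ _ (by simp)
    filter_upwards [hbound.eventually (gt_mem_nhds hN), self_mem_nhdsWithin]
      with l hlb (hl : 0 < l)
    exact (mul_tsum_inv_one_add_pow_sq_le hl N.succ_ne_zero).trans_lt hlb
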